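/- arXiv:math/0208028 — 9 statements merged into one kernel-verified Lean document; each statement's English description precedes it below -/
import Mathlib

section
/- Let p be a prime and let g, h be integers with 1 ≤ g ≤ p−1, 1 ≤ h ≤ p−1, and g^h ≡ h (mod p). If h is a primitive root mod p, then g is a primitive root mod p and gcd(h, p−1) = 1. -/
/-!
In `ZMod p` the fixed-point equation says `g ^ h = h`. The order of a power divides the order of
the base, and by Fermat the order of `g` divides `p - 1`; so if `h` has order `p - 1`, then `g`
has order `p - 1` as well, and `orderOf (g ^ h) = orderOf g / gcd (orderOf g) h` forces `h` to be
coprime to `p - 1`.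
-/

theorem Nat.Coprime.of_orderOf_pow_eq {G : Type*} [Monoid G] {x : G} {n : ℕ}
    (hx : orderOf x ≠ 0) (hxn : orderOf (x ^ n) = orderOf x) : n.Coprime (orderOf x) := by
  rcases eq_or_ne n 0 with rfl | hn
  · rw [pow_zero, orderOf_one] at hxn
    simp [← hxn]
  · rw [orderOf_pow' x hn, Nat.div_eq_self] at hxn
    exact Nat.coprime_comm.1 (hxn.resolve_left hx)

theorem stmt_2_general (p : ℕ) (hp : p.Prime) (g h : ℕ)
    (hfp : g ^ h ≡ h [MOD p])
    (hpr : orderOf (h : ZMod p) = p - 1) :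
    orderOf (g : ZMod p) = p - 1 ∧ Nat.gcd h (p - 1) = 1 := by
  have : Fact p.Prime := ⟨hp⟩
  have hp1 : p - 1 ≠ 0 := Nat.sub_ne_zero_of_lt hp.one_lt
  have hfix : (g : ZMod p) ^ h = h := by
    exact_mod_cast (ZMod.natCast_eq_natCast_iff _ _ _).2 hfp
  have hh0 : (h : ZMod p) ≠ 0 := by
    intro h0
    rw [h0, orderOf_zero] at hpr
    exact hp1 hpr.symm
  have hg0 : (g : ZMod p) ≠ 0 :=
    ne_zero_pow (by rintro rfl; exact hh0 Nat.cast_zero) (hfix ▸ hh0)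
  have hord : orderOf (g : ZMod p) = p - 1 :=
    dvd_antisymm (ZMod.orderOf_dvd_card_sub_one hg0) (hpr ▸ hfix ▸ orderOf_pow_dvd h)
  refine ⟨hord, ?_⟩
  have hcop := Nat.Coprime.of_orderOf_pow_eq (x := (g : ZMod p)) (n := h)
    (hord ▸ hp1) (by rw [hfix, hpr, hord])
  rwa [hord] at hcop

theorem stmt_2 (p : ℕ) (hp : p.Prime) (g h : ℕ)
    (hg1 : 1 ≤ g) (hg2 : g ≤ p - 1) (hh1 : 1 ≤ h) (hh2 : h ≤ p - 1)
    (hfp : g ^ h ≡ h [MOD p])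
    (hpr : orderOf (h : ZMod p) = p - 1) :
    orderOf (g : ZMod p) = p - 1 ∧ Nat.gcd h (p - 1) = 1 :=
  stmt_2_general p hp g h hfp hpr
end

section
/- Let p be a prime. The number of pairs (g,h) with 1 ≤ g, h ≤ p−1, g^h ≡ h (mod p), and h a primitive root mod p equals the number of pairs (g,h) with 1 ≤ g, h ≤ p−1, g^h ≡ h (mod p), g a primitive root mod p, gcd(h, p−1) = 1, and h a primitive root mod p. -/
/-! If `g ^ h ≡ h (mod p)` and `h` is a primitive root, then `g ^ h` has order `p - 1`, while the
order of `g ^ h` is `ord g / gcd (ord g, h)` with `ord g ∣ p - 1`. This forces `ord g = p - 1` and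
`gcd (h, p - 1) = 1`, so the two extra conditions on the right are automatic. -/

theorem orderOf_eq_and_coprime_of_orderOf_pow {G : Type*} [Monoid G] {x : G} {m n : ℕ}
    (hm : m ≠ 0) (hx : orderOf x ∣ m) (h : orderOf (x ^ n) = m) :
    orderOf x = m ∧ n.Coprime m := by
  have hord : orderOf x = m := Nat.dvd_antisymm hx (h ▸ orderOf_pow_dvd n)
  have hfin : IsOfFinOrder x := orderOf_pos_iff.mp (by omega)
  rw [hfin.orderOf_pow, hord, Nat.div_eq_self] at h
  exact ⟨hord, Nat.coprime_comm.mp (h.resolve_left hm)⟩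

open scoped Classical in
theorem stmt_3 (p : ℕ) (hp : p.Prime) :
    ((Finset.Icc 1 (p - 1) ×ˢ Finset.Icc 1 (p - 1)).filter
      (fun gh : ℕ × ℕ => gh.1 ^ gh.2 ≡ gh.2 [MOD p] ∧
        orderOf ((gh.2 : ZMod p)) = p - 1)).card
    =
    ((Finset.Icc 1 (p - 1) ×ˢ Finset.Icc 1 (p - 1)).filter
      (fun gh : ℕ × ℕ => gh.1 ^ gh.2 ≡ gh.2 [MOD p] ∧
        orderOf ((gh.1 : ZMod p)) = p - 1 ∧
        Nat.gcd gh.2 (p - 1) = 1 ∧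
        orderOf ((gh.2 : ZMod p)) = p - 1)).card := by
  have : Fact p.Prime := ⟨hp⟩
  have hp1 : p - 1 ≠ 0 := by have := hp.two_le; omega
  congr 1
  refine Finset.filter_congr fun ⟨g, h⟩ hgh => ?_
  simp only [Finset.mem_product, Finset.mem_Icc] at hgh
  have hg0 : (g : ZMod p) ≠ 0 :=
    (ZMod.natCast_eq_zero_iff g p).not.mpr (Nat.not_dvd_of_pos_of_lt (by omega) (by omega))
  constructor
  · rintro ⟨hmod, hordh⟩
    have hpow : orderOf ((g : ZMod p) ^ h) = p - 1 := by
      rwa [← Nat.cast_pow, (ZMod.natCast_eq_natCast_iff _ _ _).mpr hmod]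
    obtain ⟨hordg, hcop⟩ :=
      orderOf_eq_and_coprime_of_orderOf_pow hp1 (ZMod.orderOf_dvd_card_sub_one hg0) hpow
    exact ⟨hmod, hordg, hcop, hordh⟩
  · rintro ⟨hmod, -, -, hordh⟩
    exact ⟨hmod, hordh⟩
end

section
/- Let p be a prime. The following five counts of pairs (g,h) with 1 ≤ g, h ≤ p−1 and g^h ≡ h (mod p) are all equal: (1) those with g a primitive root, gcd(h, p−1) = 1, and h a primitive root; (2) those with g a primitive root and gcd(h, p−1) = 1; (3) those with g a primitive root and h a primitive root; (4) those with gcd(h, p−1) = 1 and h a primitive root; (5) those with h a primitive root. -/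
/-!
If `g ^ h ≡ h (mod p)` then `h` is a power of `g`, so `ord h = ord g / gcd(ord g, h)`. Since
`ord g ∣ p - 1`, this equals `p - 1` exactly when `ord g = p - 1` and `gcd(h, p - 1) = 1`.
So on solutions of the fixed-point equation "h is a primitive root" is equivalent to
"g is a primitive root and h is RP", and each of the five conditions reduces to the latter.
-/

theorem orderOf_pow_eq_iff_of_orderOf_dvd {M : Type*} [Monoid M] {x : M} {k n : ℕ} (hn : 0 < n)
    (hx : orderOf x ∣ n) : orderOf (x ^ k) = n ↔ orderOf x = n ∧ k.Coprime n := by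
  have hfin : IsOfFinOrder x := orderOf_pos_iff.mp (Nat.pos_of_dvd_of_pos hx hn)
  constructor
  · intro hk
    have hxn : orderOf x = n := Nat.dvd_antisymm hx (hk ▸ orderOf_pow_dvd k)
    rw [hfin.orderOf_pow, hxn, Nat.div_eq_self] at hk
    exact ⟨hxn, Nat.coprime_comm.mp (hk.resolve_left hn.ne')⟩
  · rintro ⟨hxn, hk⟩
    rw [(hxn ▸ hk.symm : (orderOf x).Coprime k).orderOf_pow, hxn]

theorem FiniteField.orderOf_pow_eq_card_sub_one_iff {K : Type*} [Field K] [Fintype K] {x : K}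
    (hx : x ≠ 0) (k : ℕ) :
    orderOf (x ^ k) = Fintype.card K - 1 ↔
      orderOf x = Fintype.card K - 1 ∧ k.Coprime (Fintype.card K - 1) :=
  orderOf_pow_eq_iff_of_orderOf_dvd (Nat.sub_pos_of_lt Fintype.one_lt_card)
    (orderOf_dvd_of_pow_eq_one (FiniteField.pow_card_sub_one_eq_one x hx))

theorem ZMod.orderOf_natCast_eq_sub_one_iff_of_pow_modEq {p : ℕ} [Fact p.Prime] {g h : ℕ}
    (hh : (h : ZMod p) ≠ 0) (hfp : g ^ h ≡ h [MOD p]) :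
    orderOf (h : ZMod p) = p - 1 ↔ orderOf (g : ZMod p) = p - 1 ∧ h.Coprime (p - 1) := by
  have hgh : (g : ZMod p) ^ h = h := by
    exact_mod_cast (ZMod.natCast_eq_natCast_iff _ _ _).mpr hfp
  have hg : (g : ZMod p) ≠ 0 := by
    rintro hg0
    have hh0 : h ≠ 0 := by rintro rfl; exact hh Nat.cast_zero
    rw [hg0, zero_pow hh0] at hgh
    exact hh hgh.symm
  rw [← hgh]
  simpa only [ZMod.card] using FiniteField.orderOf_pow_eq_card_sub_one_iff hg h

open scoped Classical in
theorem stmt_5 (p : ℕ) (hp : p.Prime) :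
    let S := Finset.Icc 1 (p - 1) ×ˢ Finset.Icc 1 (p - 1)
    let fp : ℕ × ℕ → Prop := fun gh => gh.1 ^ gh.2 ≡ gh.2 [MOD p]
    let PR : ℕ → Prop := fun x => orderOf (x : ZMod p) = p - 1
    let RP : ℕ → Prop := fun x => Nat.gcd x (p - 1) = 1
    ((S.filter (fun gh => fp gh ∧ PR gh.1 ∧ RP gh.2 ∧ PR gh.2)).card
      = (S.filter (fun gh => fp gh ∧ PR gh.1 ∧ RP gh.2)).card) ∧
    ((S.filter (fun gh => fp gh ∧ PR gh.1 ∧ RP gh.2 ∧ PR gh.2)).card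
      = (S.filter (fun gh => fp gh ∧ PR gh.1 ∧ PR gh.2)).card) ∧
    ((S.filter (fun gh => fp gh ∧ PR gh.1 ∧ RP gh.2 ∧ PR gh.2)).card
      = (S.filter (fun gh => fp gh ∧ RP gh.2 ∧ PR gh.2)).card) ∧
    ((S.filter (fun gh => fp gh ∧ PR gh.1 ∧ RP gh.2 ∧ PR gh.2)).card
      = (S.filter (fun gh => fp gh ∧ PR gh.2)).card) := by
  intro S fp PR RP
  have : Fact p.Prime := ⟨hp⟩
  have key : ∀ gh ∈ S, fp gh → (PR gh.2 ↔ PR gh.1 ∧ RP gh.2) := by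
    rintro ⟨g, h⟩ hgh hfp
    obtain ⟨-, hh1, hhp⟩ : _ ∧ 1 ≤ h ∧ h ≤ p - 1 := by simpa [S] using hgh
    have hh : (h : ZMod p) ≠ 0 := by
      rw [Ne, ZMod.natCast_eq_zero_iff]
      exact fun hdvd => absurd (Nat.le_of_dvd hh1 hdvd) (by omega)
    exact ZMod.orderOf_natCast_eq_sub_one_iff_of_pow_modEq hh hfp
  refine ⟨?_, ?_, ?_, ?_⟩ <;>
  · congr 1
    refine Finset.filter_congr fun gh hgh => ?_
    have := key gh hgh
    tauto
end

section
/- Let p be a prime and let h, a be integers with 1 ≤ h, a ≤ p−1 such that gcd(gcd(h, a), p−1) = 1. If g₁ and g₂ are integers with 1 ≤ g₁, g₂ ≤ p−1 satisfying g₁^h ≡ g₂^h ≡ a (mod p) and g₁^a ≡ g₂^a ≡ h (mod p), then g₁ = g₂. In other words, when gcd(h, a, p−1) = 1, at most one base g yields the two-cycle (h, a). -/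
/-!
If `g₁, g₂` both realise the two-cycle `(h, a)`, then `u = g₁ / g₂` in `(ℤ/pℤ)ˣ` satisfies
`u ^ h = u ^ a = 1`, and also `u ^ (p - 1) = 1` by Fermat. Hence `u ^ gcd(h, a, p - 1) = 1`,
so `u = 1` and `g₁ ≡ g₂ (mod p)`, which forces `g₁ = g₂` for residues in `[1, p - 1]`.
-/

theorem pow_gcd_eq_pow_gcd_of_pow_eq_pow {G₀ : Type*} [CommGroupWithZero G₀] {x y : G₀}
    (hy : y ≠ 0) {m n : ℕ} (hm : x ^ m = y ^ m) (hn : x ^ n = y ^ n) :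
    x ^ m.gcd n = y ^ m.gcd n := by
  have hquot : ∀ k, x ^ k = y ^ k → (x / y) ^ k = 1 := fun k hk => by
    rw [div_pow, hk, div_self (pow_ne_zero k hy)]
  have := pow_gcd_eq_one.mpr ⟨hquot m hm, hquot n hn⟩
  rwa [div_pow, div_eq_one_iff_eq (pow_ne_zero _ hy)] at this

theorem eq_of_pow_eq_pow_of_gcd_card_sub_one_eq_one {G₀ : Type*} [CommGroupWithZero G₀]
    [Fintype G₀] {x y : G₀} (hx : x ≠ 0) (hy : y ≠ 0) {m n : ℕ}
    (hm : x ^ m = y ^ m) (hn : x ^ n = y ^ n)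
    (hgcd : (m.gcd n).gcd (Fintype.card G₀ - 1) = 1) : x = y := by
  have hmn := pow_gcd_eq_pow_gcd_of_pow_eq_pow hy hm hn
  have hq : x ^ (Fintype.card G₀ - 1) = y ^ (Fintype.card G₀ - 1) := by
    rw [FiniteField.pow_card_sub_one_eq_one x hx, FiniteField.pow_card_sub_one_eq_one y hy]
  simpa [hgcd] using pow_gcd_eq_pow_gcd_of_pow_eq_pow hy hmn hq

theorem ZMod.natCast_ne_zero_of_pos_of_lt {p g : ℕ} (hg : 0 < g) (hgp : g < p) :
    (g : ZMod p) ≠ 0 := by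
  rw [Ne, ZMod.natCast_eq_zero_iff]
  exact fun hdvd => absurd (Nat.le_of_dvd hg hdvd) (by omega)

theorem ZMod.natCast_pow_eq_natCast_pow_of_modEq {p g₁ g₂ k c : ℕ}
    (e₁ : g₁ ^ k ≡ c [MOD p]) (e₂ : g₂ ^ k ≡ c [MOD p]) :
    (g₁ : ZMod p) ^ k = (g₂ : ZMod p) ^ k := by
  exact_mod_cast (ZMod.natCast_eq_natCast_iff _ _ _).mpr (e₁.trans e₂.symm)

theorem stmt_8_general (p : ℕ) (hp : p.Prime) (h a : ℕ)
    (hgcd : Nat.gcd (Nat.gcd h a) (p - 1) = 1)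
    (g₁ g₂ : ℕ) (hg₁1 : 1 ≤ g₁) (hg₁2 : g₁ ≤ p - 1) (hg₂1 : 1 ≤ g₂) (hg₂2 : g₂ ≤ p - 1)
    (e1 : g₁ ^ h ≡ a [MOD p]) (e2 : g₂ ^ h ≡ a [MOD p])
    (e3 : g₁ ^ a ≡ h [MOD p]) (e4 : g₂ ^ a ≡ h [MOD p]) :
    g₁ = g₂ := by
  have : Fact p.Prime := ⟨hp⟩
  have hg₁p : g₁ < p := by have := hp.two_le; omega
  have hg₂p : g₂ < p := by have := hp.two_le; omega
  have hcast : (g₁ : ZMod p) = g₂ :=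
    eq_of_pow_eq_pow_of_gcd_card_sub_one_eq_one
      (ZMod.natCast_ne_zero_of_pos_of_lt hg₁1 hg₁p) (ZMod.natCast_ne_zero_of_pos_of_lt hg₂1 hg₂p)
      (ZMod.natCast_pow_eq_natCast_pow_of_modEq e1 e2)
      (ZMod.natCast_pow_eq_natCast_pow_of_modEq e3 e4) (by rwa [ZMod.card])
  rw [← ZMod.val_natCast_of_lt hg₁p, ← ZMod.val_natCast_of_lt hg₂p, hcast]

theorem stmt_8 (p : ℕ) (hp : p.Prime) (h a : ℕ)
    (hh1 : 1 ≤ h) (hh2 : h ≤ p - 1) (ha1 : 1 ≤ a) (ha2 : a ≤ p - 1)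
    (hgcd : Nat.gcd (Nat.gcd h a) (p - 1) = 1)
    (g₁ g₂ : ℕ) (hg₁1 : 1 ≤ g₁) (hg₁2 : g₁ ≤ p - 1) (hg₂1 : 1 ≤ g₂) (hg₂2 : g₂ ≤ p - 1)
    (e1 : g₁ ^ h ≡ a [MOD p]) (e2 : g₂ ^ h ≡ a [MOD p])
    (e3 : g₁ ^ a ≡ h [MOD p]) (e4 : g₂ ^ a ≡ h [MOD p]) :
    g₁ = g₂ :=
  stmt_8_general p hp h a hgcd g₁ g₂ hg₁1 hg₁2 hg₂1 hg₂2 e1 e2 e3 e4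
end

section
/- Let p be a prime and let h, a be integers with 1 ≤ h, a ≤ p−1 and gcd(h, p−1) = 1. Then h^h ≡ a^a (mod p) if and only if there exists a unique integer g with 1 ≤ g ≤ p−1 such that g^h ≡ a (mod p) and g^a ≡ h (mod p). -/
/-!
Since `gcd(h, p - 1) = 1`, the map `x ↦ x ^ h` is a bijection of `(ZMod p)ˣ`. So `a` has a unique
nonzero `h`-th root `g`, and `g ^ a = h` is equivalent to `(g ^ a) ^ h = h ^ h`, i.e. to
`a ^ a = h ^ h`, because `(g ^ a) ^ h = (g ^ h) ^ a = a ^ a`.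
-/

section GroupWithZero

variable {G₀ : Type*} [GroupWithZero G₀] {n : ℕ}

theorem pow_left_bijective_units_of_coprime (hn : n.Coprime (Nat.card G₀ - 1)) :
    Function.Bijective (· ^ n : G₀ˣ → G₀ˣ) :=
  Nat.Coprime.pow_left_bijective (by rw [Nat.card_units]; exact hn.symm)

theorem pow_left_inj_of_coprime (hn : n.Coprime (Nat.card G₀ - 1)) {x y : G₀} (hx : x ≠ 0)
    (hy : y ≠ 0) : x ^ n = y ^ n ↔ x = y := by
  refine ⟨fun hxy => ?_, fun hxy => hxy ▸ rfl⟩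
  have := (pow_left_bijective_units_of_coprime hn).injective
    (a₁ := Units.mk0 x hx) (a₂ := Units.mk0 y hy) (Units.ext (by simpa using hxy))
  simpa using congrArg Units.val this

theorem exists_pow_eq_of_coprime (hn : n.Coprime (Nat.card G₀ - 1)) {y : G₀} (hy : y ≠ 0) :
    ∃ x, x ≠ 0 ∧ x ^ n = y := by
  obtain ⟨x, hx⟩ := (pow_left_bijective_units_of_coprime hn).surjective (Units.mk0 y hy)
  exact ⟨x, x.ne_zero, by simpa using congrArg Units.val hx⟩

theorem pow_eq_pow_iff_existsUnique_two_cycle {m : ℕ} (hn : n.Coprime (Nat.card G₀ - 1))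
    {x y : G₀} (hx : x ≠ 0) (hy : y ≠ 0) :
    x ^ n = y ^ m ↔ ∃! g : G₀, g ≠ 0 ∧ g ^ n = y ∧ g ^ m = x := by
  constructor
  · intro hxy
    obtain ⟨g, hg, hgy⟩ := exists_pow_eq_of_coprime hn hy
    refine ⟨g, ⟨hg, hgy, ?_⟩, fun g' ⟨hg', hg'y, _⟩ => ?_⟩
    · rw [← pow_left_inj_of_coprime hn (pow_ne_zero m hg) hx, pow_right_comm, hgy, hxy]
    · rwa [← pow_left_inj_of_coprime hn hg' hg, hgy]
  · rintro ⟨g, ⟨-, hgy, hgx⟩, -⟩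
    rw [← hgx, ← hgy, pow_right_comm]

end GroupWithZero

namespace ZMod

theorem natCast_ne_zero_of_pos_of_lt_s9 {p g : ℕ} (hg : 0 < g) (hgp : g < p) : (g : ZMod p) ≠ 0 := by
  rw [Ne, natCast_eq_zero_iff]
  exact fun hdvd => absurd (Nat.le_of_dvd hg hdvd) (by omega)

theorem existsUnique_nat_iff {p : ℕ} [NeZero p] {P : ZMod p → Prop} :
    (∃! g : ℕ, 1 ≤ g ∧ g ≤ p - 1 ∧ P g) ↔ ∃! x : ZMod p, x ≠ 0 ∧ P x := by
  have val_le_pred (x : ZMod p) : x.val ≤ p - 1 := by have := x.val_lt; omega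
  constructor
  · rintro ⟨g, ⟨hg1, hgp, hPg⟩, hg⟩
    refine ⟨g, ⟨natCast_ne_zero_of_pos_of_lt_s9 hg1 (by omega), hPg⟩, fun x ⟨hx, hPx⟩ => ?_⟩
    rw [← hg x.val ⟨val_pos.2 hx, val_le_pred x, by rwa [natCast_zmod_val]⟩, natCast_zmod_val]
  · rintro ⟨x, ⟨hx, hPx⟩, hx'⟩
    refine ⟨x.val, ⟨val_pos.2 hx, val_le_pred x, by rwa [natCast_zmod_val]⟩,
      fun g ⟨hg1, hgp, hPg⟩ => ?_⟩
    rw [← hx' g ⟨natCast_ne_zero_of_pos_of_lt_s9 hg1 (by omega), hPg⟩, val_natCast_of_lt (by omega)]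

end ZMod

theorem stmt_9 (p : ℕ) (hp : p.Prime) (h a : ℕ)
    (hh1 : 1 ≤ h) (hh2 : h ≤ p - 1) (ha1 : 1 ≤ a) (ha2 : a ≤ p - 1)
    (hrp : Nat.gcd h (p - 1) = 1) :
    h ^ h ≡ a ^ a [MOD p] ↔
      ∃! g : ℕ, 1 ≤ g ∧ g ≤ p - 1 ∧ g ^ h ≡ a [MOD p] ∧ g ^ a ≡ h [MOD p] := by
  have : Fact p.Prime := ⟨hp⟩
  have hp1 := hp.one_lt
  have hh0 : (h : ZMod p) ≠ 0 := ZMod.natCast_ne_zero_of_pos_of_lt_s9 hh1 (by omega)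
  have ha0 : (a : ZMod p) ≠ 0 := ZMod.natCast_ne_zero_of_pos_of_lt_s9 ha1 (by omega)
  simp_rw [← ZMod.natCast_eq_natCast_iff, Nat.cast_pow]
  exact (pow_eq_pow_iff_existsUnique_two_cycle (by rwa [Nat.card_zmod]) hh0 ha0).trans
    ZMod.existsUnique_nat_iff.symm
end

section
/- Let p be a prime. The number of triples (g,h,a) with 1 ≤ g, h, a ≤ p−1 satisfying g^h ≡ a (mod p), g^a ≡ h (mod p), and gcd(h, p−1) = 1 equals the number of pairs (h,a) with 1 ≤ h, a ≤ p−1 satisfying h^h ≡ a^a (mod p) and gcd(h, p−1) = 1. -/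
/-!
Since `gcd h (p - 1) = 1`, the map `x ↦ x ^ h` permutes the nonzero residues mod `p`. Hence in a
solution of (tc) with this `h` the base `g` is the unique `h`-th root of `a`, and for that root
`g ^ a = h` holds iff `(g ^ a) ^ h = (g ^ h) ^ a = a ^ a` equals `h ^ h`. So `(g, h, a) ↦ (h, a)` is a
bijection from the solutions of (tc) onto those of (ha).
-/

namespace ZMod

variable {p : ℕ} [Fact p.Prime] {h : ℕ}

theorem pow_units_bijective (hh : h.Coprime (p - 1)) :
    Function.Bijective (fun u : (ZMod p)ˣ => u ^ h) := by
  refine (powCoprime ?_).bijective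
  rwa [Nat.card_eq_fintype_card, card_units_eq_totient, Nat.totient_prime Fact.out,
    Nat.coprime_comm]

theorem pow_left_injOn_ne_zero (hh : h.Coprime (p - 1)) :
    Set.InjOn (· ^ h) {x : ZMod p | x ≠ 0} := by
  intro x hx y hy hxy
  have := (pow_units_bijective hh).injective (a₁ := Units.mk0 x hx) (a₂ := Units.mk0 y hy)
    (Units.ext (by simpa using hxy))
  simpa using congrArg Units.val this

theorem exists_ne_zero_pow_eq (hh : h.Coprime (p - 1)) {a : ZMod p} (ha : a ≠ 0) :
    ∃ x ≠ 0, x ^ h = a := by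
  obtain ⟨u, hu⟩ := (pow_units_bijective hh).surjective (Units.mk0 a ha)
  exact ⟨u, u.ne_zero, by simpa using congrArg Units.val hu⟩

theorem pow_eq_iff_of_pow_eq (hh : h.Coprime (p - 1)) {g x y : ZMod p} (hg : g ≠ 0)
    (hy : y ≠ 0) (hgx : g ^ h = x) (a : ℕ) : g ^ a = y ↔ x ^ a = y ^ h := by
  rw [← hgx, ← pow_mul, mul_comm, pow_mul]
  exact ⟨fun e => e ▸ rfl, fun e => pow_left_injOn_ne_zero hh (pow_ne_zero a hg) hy e⟩

theorem natCast_ne_zero_of_mem_Icc {x : ℕ} (hx : x ∈ Finset.Icc 1 (p - 1)) : (x : ZMod p) ≠ 0 := by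
  rw [Finset.mem_Icc] at hx
  rw [Ne, natCast_eq_zero_iff]
  exact Nat.not_dvd_of_pos_of_lt (by omega) (by omega)

theorem natCast_injOn_Icc : Set.InjOn (Nat.cast : ℕ → ZMod p) (Finset.Icc 1 (p - 1)) := by
  intro x hx y hy hxy
  rw [Finset.coe_Icc, Set.mem_Icc] at hx hy
  rw [← val_cast_of_lt (n := p) (by omega : x < p), ← val_cast_of_lt (n := p) (by omega : y < p),
    hxy]

theorem natCast_pow_injOn_Icc (hh : h.Coprime (p - 1)) :
    Set.InjOn (fun g : ℕ => (g : ZMod p) ^ h) (Finset.Icc 1 (p - 1)) := fun _ hx _ hy hxy =>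
  natCast_injOn_Icc hx hy <|
    pow_left_injOn_ne_zero hh (natCast_ne_zero_of_mem_Icc hx) (natCast_ne_zero_of_mem_Icc hy) hxy

theorem val_mem_Icc_of_ne_zero {x : ZMod p} (hx : x ≠ 0) : x.val ∈ Finset.Icc 1 (p - 1) := by
  have := val_lt x
  have := (val_ne_zero x).mpr hx
  rw [Finset.mem_Icc]
  omega

end ZMod

open scoped Classical in
theorem stmt_10 (p : ℕ) (hp : p.Prime) :
    ((Finset.Icc 1 (p - 1) ×ˢ Finset.Icc 1 (p - 1) ×ˢ Finset.Icc 1 (p - 1)).filter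
      (fun t : ℕ × ℕ × ℕ => t.1 ^ t.2.1 ≡ t.2.2 [MOD p] ∧ t.1 ^ t.2.2 ≡ t.2.1 [MOD p] ∧
        Nat.gcd t.2.1 (p - 1) = 1)).card
    =
    ((Finset.Icc 1 (p - 1) ×ˢ Finset.Icc 1 (p - 1)).filter
      (fun ha : ℕ × ℕ => ha.1 ^ ha.1 ≡ ha.2 ^ ha.2 [MOD p] ∧
        Nat.gcd ha.1 (p - 1) = 1)).card := by
  have : Fact p.Prime := ⟨hp⟩
  simp only [← ZMod.natCast_eq_natCast_iff, Nat.cast_pow]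
  refine Finset.card_bij (fun t _ => t.2) ?_ ?_ ?_
  · rintro ⟨g, h, a⟩ ht
    simp only [Finset.mem_filter, Finset.mem_product] at ht ⊢
    obtain ⟨⟨-, hh, ha⟩, hgh, hga, hcop⟩ := ht
    exact ⟨⟨hh, ha⟩, by rw [← hga, ← hgh, ← pow_mul, ← pow_mul, mul_comm], hcop⟩
  · rintro ⟨g₁, h, a⟩ ht₁ ⟨g₂, h₂, a₂⟩ ht₂ hha
    obtain ⟨rfl, rfl⟩ := Prod.mk.inj hha
    simp only [Finset.mem_filter, Finset.mem_product] at ht₁ ht₂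
    obtain ⟨⟨hg₁, -, -⟩, hg₁h, -, hcop⟩ := ht₁
    obtain ⟨⟨hg₂, -, -⟩, hg₂h, -, -⟩ := ht₂
    rw [ZMod.natCast_pow_injOn_Icc hcop hg₁ hg₂ (hg₁h.trans hg₂h.symm)]
  · rintro ⟨h, a⟩ hha
    simp only [Finset.mem_filter, Finset.mem_product] at hha
    obtain ⟨⟨hh, ha⟩, hpow, hcop⟩ := hha
    obtain ⟨g, hg, hgh⟩ := ZMod.exists_ne_zero_pow_eq hcop (ZMod.natCast_ne_zero_of_mem_Icc ha)
    have hga : g ^ a = h :=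
      (ZMod.pow_eq_iff_of_pow_eq hcop hg (ZMod.natCast_ne_zero_of_mem_Icc hh) hgh a).mpr hpow.symm
    refine ⟨(g.val, h, a), ?_, rfl⟩
    simp only [Finset.mem_filter, Finset.mem_product, ZMod.natCast_zmod_val]
    exact ⟨⟨ZMod.val_mem_Icc_of_ne_zero hg, hh, ha⟩, hgh, hga, hcop⟩
end

section
/- Let n be a squarefree positive integer. Then, as an identity of rational numbers, ∑_{m ∣ n} (φ(m)³/m²) · (∑_{d ∣ n/m} φ(d)/d)² = ∏_{q ∣ n, q prime} (q + 1 − 1/q), where φ is Euler's totient function and the product is over the prime divisors q of n. -/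
/-!
The left-hand side is the Dirichlet convolution of `m ↦ φ(m)³/m²` with the square of
`k ↦ ∑_{d ∣ k} φ(d)/d`; both factors are multiplicative, hence so is the sum, and on a squarefree
`n` it is the product of its values at the primes `q ∣ n`. At a prime only `m = 1` and `m = q`
contribute: `((2q - 1)² + (q - 1)³) / q² = q + 1 - 1/q`.
-/

open Finset

namespace ArithmeticFunction

def totient : ArithmeticFunction ℕ := ⟨Nat.totient, Nat.totient_zero⟩

@[simp]
lemma totient_apply (n : ℕ) : totient n = n.totient := rfl

lemma isMultiplicative_totient : totient.IsMultiplicative :=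
  ⟨Nat.totient_one, fun h => Nat.totient_mul h⟩

variable {K : Type*} [Field K]

noncomputable def sumTotientDivId : ArithmeticFunction K :=
  (zeta : ArithmeticFunction K) * (totient : ArithmeticFunction K).pdiv ArithmeticFunction.id

noncomputable def totientCubeConvSq : ArithmeticFunction K :=
  ((totient : ArithmeticFunction K).ppow 3).pdiv
      ((ArithmeticFunction.id : ArithmeticFunction K).ppow 2) *
    sumTotientDivId.ppow 2

lemma sumTotientDivId_apply (k : ℕ) :
    sumTotientDivId k = ∑ d ∈ k.divisors, (d.totient : K) / d := by
  simp only [sumTotientDivId, coe_zeta_mul_apply, pdiv_apply, natCoe_apply, totient_apply,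
    id_apply]

lemma totientCubeConvSq_apply (n : ℕ) :
    totientCubeConvSq n = ∑ m ∈ n.divisors, ((m.totient : K) ^ 3 / (m : K) ^ 2) *
      (∑ d ∈ (n / m).divisors, (d.totient : K) / d) ^ 2 := by
  rw [totientCubeConvSq, mul_apply, Nat.sum_divisorsAntidiagonal fun m k =>
    ((totient : ArithmeticFunction K).ppow 3).pdiv
      ((ArithmeticFunction.id : ArithmeticFunction K).ppow 2) m * sumTotientDivId.ppow 2 k]
  simp only [pdiv_apply, ppow_apply two_pos, ppow_apply three_pos, natCoe_apply, totient_apply,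
    id_apply, sumTotientDivId_apply]

lemma isMultiplicative_sumTotientDivId :
    (sumTotientDivId : ArithmeticFunction K).IsMultiplicative :=
  isMultiplicative_zeta.natCast.mul
    (isMultiplicative_totient.natCast.pdiv isMultiplicative_id.natCast)

lemma isMultiplicative_totientCubeConvSq :
    (totientCubeConvSq : ArithmeticFunction K).IsMultiplicative :=
  (isMultiplicative_totient.natCast.ppow.pdiv isMultiplicative_id.natCast.ppow).mul
    isMultiplicative_sumTotientDivId.ppow

lemma totientCubeConvSq_prime [CharZero K] {p : ℕ} (hp : p.Prime) :
    totientCubeConvSq p = (p : K) + 1 - 1 / p := by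
  have hp0 : (p : K) ≠ 0 := Nat.cast_ne_zero.mpr hp.ne_zero
  rw [totientCubeConvSq_apply, hp.divisors, sum_pair hp.one_lt.ne, Nat.div_one,
    Nat.div_self hp.pos, hp.divisors, Nat.divisors_one, sum_pair hp.one_lt.ne, sum_singleton]
  simp only [Nat.totient_one, Nat.totient_prime hp, Nat.cast_sub hp.one_le, Nat.cast_one]
  field_simp
  ring

end ArithmeticFunction

theorem stmt_12_general (n : ℕ) (hsf : Squarefree n) :
    ∑ m ∈ n.divisors, ((Nat.totient m : ℚ) ^ 3 / (m : ℚ) ^ 2) *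
        (∑ d ∈ (n / m).divisors, (Nat.totient d : ℚ) / (d : ℚ)) ^ 2
    = ∏ q ∈ n.primeFactors, ((q : ℚ) + 1 - 1 / (q : ℚ)) := by
  rw [← ArithmeticFunction.totientCubeConvSq_apply,
    ← ArithmeticFunction.isMultiplicative_totientCubeConvSq.prod_primeFactors hsf]
  exact prod_congr rfl fun q hq =>
    ArithmeticFunction.totientCubeConvSq_prime (Nat.prime_of_mem_primeFactors hq)

theorem stmt_12 (n : ℕ) (hn : 0 < n) (hsf : Squarefree n) :
    ∑ m ∈ n.divisors, ((Nat.totient m : ℚ) ^ 3 / (m : ℚ) ^ 2) *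
        (∑ d ∈ (n / m).divisors, (Nat.totient d : ℚ) / (d : ℚ)) ^ 2
    = ∏ q ∈ n.primeFactors, ((q : ℚ) + 1 - 1 / (q : ℚ)) :=
  stmt_12_general n hsf
end

section
/- Let n be a positive integer. Then, as an identity of rational numbers, ∑_{m ∣ n} (φ(m)/m²) · (∑_{d ∣ n/m} φ(d·m)/d)² = ∏_{q ∣ n, q prime} ( ∑_{β=0}^{α_q} φ(q^β) · [(1 − 1/q)(α_q − β) + φ(q^β)/q^β]² ), where α_q is the exponent of the prime q in the factorization of n and φ is Euler's totient function. -/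
/-!
The left-hand side is multiplicative in `n`: a divisor of a coprime product `x * y` is uniquely
`m = a * b` with `a ∣ x`, `b ∣ y`, and then `n / m = (x / a) * (y / b)` with `x / a`, `a`
coprime to `y / b`, `b`, so `φ m` and the inner sum factor as well. On a prime power `q ^ α`
the inner sum for `m = q ^ γ` is explicit because `φ (q ^ (δ + 1)) / q ^ (δ + 1) = 1 - 1 / q`.
-/

open Finset

theorem Nat.Coprime.sum_divisors_mul_of_map_mul {R : Type*} [CommSemiring R] {m n : ℕ}
    (hmn : m.Coprime n) {f g h : ℕ → R}
    (hf : ∀ a ∈ m.divisors, ∀ b ∈ n.divisors, f (a * b) = g a * h b) :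
    ∑ d ∈ (m * n).divisors, f d = (∑ a ∈ m.divisors, g a) * ∑ b ∈ n.divisors, h b := by
  rw [Nat.divisors_mul, Finset.mul_def, sum_image hmn.mul_injOn_divisors, sum_product,
    sum_mul_sum]
  exact sum_congr rfl fun a ha => sum_congr rfl fun b hb => hf a ha b hb

def totientDivisorSum (m k : ℕ) : ℚ :=
  ∑ d ∈ k.divisors, (Nat.totient (d * m) : ℚ) / d

theorem totientDivisorSum_mul {a b k l : ℕ} (h : (k * a).Coprime (l * b)) :
    totientDivisorSum (a * b) (k * l) = totientDivisorSum a k * totientDivisorSum b l := by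
  have hkl : k.Coprime l := h.coprime_mul_right.coprime_mul_right_right
  refine hkl.sum_divisors_mul_of_map_mul fun d₁ hd₁ d₂ hd₂ => ?_
  have hcop : (d₁ * a).Coprime (d₂ * b) :=
    (h.coprime_dvd_left (mul_dvd_mul_right (Nat.dvd_of_mem_divisors hd₁) a)).coprime_dvd_right
      (mul_dvd_mul_right (Nat.dvd_of_mem_divisors hd₂) b)
  rw [show d₁ * d₂ * (a * b) = d₁ * a * (d₂ * b) by ring, Nat.totient_mul hcop]
  push_cast
  rw [div_mul_div_comm]

theorem Nat.Prime.totient_pow_succ_div {q : ℕ} (hq : q.Prime) (k : ℕ) :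
    (Nat.totient (q ^ (k + 1)) : ℚ) / (q : ℚ) ^ (k + 1) = 1 - 1 / q := by
  have hq0 : (q : ℚ) ≠ 0 := Nat.cast_ne_zero.mpr hq.ne_zero
  rw [Nat.totient_prime_pow_succ hq]
  push_cast [hq.one_le]
  field_simp
  ring

theorem totientDivisorSum_prime_pow {q : ℕ} (hq : q.Prime) (γ j : ℕ) :
    totientDivisorSum (q ^ γ) (q ^ j)
      = (q : ℚ) ^ γ * ((1 - 1 / (q : ℚ)) * j + (Nat.totient (q ^ γ) : ℚ) / (q : ℚ) ^ γ) := by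
  have hq0 : (q : ℚ) ≠ 0 := Nat.cast_ne_zero.mpr hq.ne_zero
  have hterm (δ : ℕ) : (Nat.totient (q ^ δ * q ^ γ) : ℚ) / ((q ^ δ : ℕ) : ℚ)
      = (q : ℚ) ^ γ * ((Nat.totient (q ^ (δ + γ)) : ℚ) / (q : ℚ) ^ (δ + γ)) := by
    rw [← pow_add, Nat.cast_pow, pow_add (q : ℚ)]
    field_simp
  rw [totientDivisorSum, Nat.sum_divisors_prime_pow hq, sum_congr rfl fun δ _ => hterm δ,
    ← mul_sum, sum_range_succ']
  simp only [Nat.add_right_comm _ 1 γ, hq.totient_pow_succ_div, sum_const, card_range,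
    nsmul_eq_mul, zero_add]
  ring

def totientSquareSum (n : ℕ) : ℚ :=
  ∑ m ∈ n.divisors, (Nat.totient m : ℚ) / (m : ℚ) ^ 2 * totientDivisorSum m (n / m) ^ 2

theorem totientSquareSum_mul {x y : ℕ} (h : x.Coprime y) :
    totientSquareSum (x * y) = totientSquareSum x * totientSquareSum y := by
  refine h.sum_divisors_mul_of_map_mul fun a ha b hb => ?_
  replace ha := Nat.dvd_of_mem_divisors ha
  replace hb := Nat.dvd_of_mem_divisors hb
  rw [← Nat.div_mul_div_comm ha hb,
    totientDivisorSum_mul (by rwa [Nat.div_mul_cancel ha, Nat.div_mul_cancel hb]),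
    Nat.totient_mul ((h.coprime_dvd_left ha).coprime_dvd_right hb)]
  push_cast
  ring

theorem totientSquareSum_prime_pow {q : ℕ} (hq : q.Prime) (α : ℕ) :
    totientSquareSum (q ^ α) = ∑ β ∈ range (α + 1),
      (Nat.totient (q ^ β) : ℚ) *
        ((1 - 1 / (q : ℚ)) * ((α : ℚ) - β) + (Nat.totient (q ^ β) : ℚ) / (q : ℚ) ^ β) ^ 2 := by
  have hq0 : (q : ℚ) ≠ 0 := Nat.cast_ne_zero.mpr hq.ne_zero
  rw [totientSquareSum, Nat.sum_divisors_prime_pow hq]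
  refine sum_congr rfl fun β hβ => ?_
  have hβ : β ≤ α := Nat.lt_succ_iff.mp (mem_range.mp hβ)
  rw [Nat.pow_div hβ hq.pos, totientDivisorSum_prime_pow hq, Nat.cast_sub hβ]
  push_cast
  field_simp

theorem stmt_14 (n : ℕ) (hn : 0 < n) :
    ∑ m ∈ n.divisors, ((Nat.totient m : ℚ) / (m : ℚ) ^ 2) *
        (∑ d ∈ (n / m).divisors, (Nat.totient (d * m) : ℚ) / (d : ℚ)) ^ 2
    = ∏ q ∈ n.primeFactors,
        ∑ β ∈ Finset.range (n.factorization q + 1),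
          (Nat.totient (q ^ β) : ℚ) *
            ((1 - 1 / (q : ℚ)) * ((n.factorization q : ℚ) - (β : ℚ)) +
              (Nat.totient (q ^ β) : ℚ) / (q : ℚ) ^ β) ^ 2 := by
  change totientSquareSum n = _
  have h_one : totientSquareSum 1 = 1 := by simp [totientSquareSum, totientDivisorSum]
  rw [Nat.multiplicative_factorization totientSquareSum (fun _ _ => totientSquareSum_mul) h_one
    hn.ne', Nat.prod_factorization_eq_prod_primeFactors]
  exact prod_congr rfl fun q hq => totientSquareSum_prime_pow (Nat.prime_of_mem_primeFactors hq) _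
end

section
/- Let p be a prime and let h, a be integers with 1 ≤ h, a ≤ p−1 such that h^h ≡ a^a (mod p), gcd(h, p−1) = 1, and h is a primitive root mod p. Then gcd(a, p−1) = 1 and a is a primitive root mod p. -/
/-!
The map `x ↦ x ^ x` only loses order: `orderOf (a ^ a) ∣ orderOf a ∣ p - 1`. Since `h` is a
primitive root coprime to `p - 1`, `h ^ h` is again a primitive root, hence so is `a ^ a ≡ h ^ h`;
this squeezes `orderOf a = p - 1`, and then `orderOf (a ^ a) = (p - 1) / gcd (p - 1) a` forces
`gcd (p - 1) a = 1`.
-/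

theorem orderOf_eq_and_coprime_of_orderOf_pow_eq {M : Type*} [Monoid M] {x : M} {n N : ℕ}
    (hN : N ≠ 0) (hx : orderOf x ∣ N) (hxn : orderOf (x ^ n) = N) :
    orderOf x = N ∧ n.Coprime N := by
  have hord : orderOf x = N := Nat.dvd_antisymm hx (hxn ▸ orderOf_pow_dvd n)
  have hfin : IsOfFinOrder x := orderOf_pos_iff.mp (Nat.pos_of_ne_zero (hord ▸ hN))
  refine ⟨hord, ?_⟩
  rw [hfin.orderOf_pow, hord, Nat.div_eq_self] at hxn
  exact Nat.coprime_comm.mp (hxn.resolve_left hN)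

theorem stmt_17_general (p : ℕ) (hp : p.Prime) (h a : ℕ)
    (ha1 : 1 ≤ a)
    (hha : h ^ h ≡ a ^ a [MOD p])
    (hrp : Nat.gcd h (p - 1) = 1)
    (hpr : orderOf (h : ZMod p) = p - 1) :
    Nat.gcd a (p - 1) = 1 ∧ orderOf (a : ZMod p) = p - 1 := by
  have := Fact.mk hp
  have hp1 : p - 1 ≠ 0 := by have := hp.two_le; omega
  have hcast : (h : ZMod p) ^ h = (a : ZMod p) ^ a := by
    exact_mod_cast (ZMod.natCast_eq_natCast_iff _ _ _).mpr hha
  have hpow : orderOf ((a : ZMod p) ^ a) = p - 1 := by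
    rw [← hcast, Nat.Coprime.orderOf_pow (hpr ▸ Nat.coprime_comm.mp hrp), hpr]
  have ha0 : (a : ZMod p) ≠ 0 := by
    have : (a : ZMod p) ^ a ≠ 0 := by
      rw [ne_eq, ← orderOf_eq_zero_iff_eq_zero, hpow]; exact hp1
    exact (pow_ne_zero_iff (by omega)).mp this
  obtain ⟨hord, hcop⟩ :=
    orderOf_eq_and_coprime_of_orderOf_pow_eq hp1 (ZMod.orderOf_dvd_card_sub_one ha0) hpow
  exact ⟨hcop, hord⟩

theorem stmt_17 (p : ℕ) (hp : p.Prime) (h a : ℕ)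
    (hh1 : 1 ≤ h) (hh2 : h ≤ p - 1) (ha1 : 1 ≤ a) (ha2 : a ≤ p - 1)
    (hha : h ^ h ≡ a ^ a [MOD p])
    (hrp : Nat.gcd h (p - 1) = 1)
    (hpr : orderOf (h : ZMod p) = p - 1) :
    Nat.gcd a (p - 1) = 1 ∧ orderOf (a : ZMod p) = p - 1 :=
  stmt_17_general p hp h a ha1 hha hrp hpr
end
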